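/- arXiv:1211.3299 — 5 statements merged into one kernel-verified Lean document; each statement's English description precedes it below -/
import Mathlib

section
/- Consider a min-cost flow instance whose edge costs c_e ∈ [0,1] are independent random variables, each having a probability density function bounded from above by φ. Suppose there exist at least two feasible integer flows, let f* denote a feasible integer flow of minimum cost, and let δ = min{c·f̂ − c·f* : f̂ a feasible integer flow, f̂ ≠ f*}. Then for every ε ≥ 0, the probability that δ ≤ ε is at most 2εφm. -/
open MeasureTheory

/-- A feasible integer flow: capacity constraints and budget (flow conservation)
constraints. -/
def IsFlow {V E : Type} [Fintype E] [DecidableEq V]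
    (src tgt : E → V) (cap : E → ℕ) (bdg : V → ℤ) (f : E → ℤ) : Prop :=
  (∀ e, 0 ≤ f e ∧ f e ≤ (cap e : ℤ)) ∧
  ∀ v, ((∑ e, if src e = v then f e else 0) - (∑ e, if tgt e = v then f e else 0)) = bdg v

/-- The cost `c · f` of an integer flow. -/
noncomputable def flowCost {E : Type} [Fintype E] (c : E → ℝ) (f : E → ℤ) : ℝ :=
  ∑ e, c e * (f e : ℝ)

/-!
If `c·f̂ - c·f* ≤ ε`, the circulation `f̂ - f*` contains a cycle `C` (entries `0, ±1`, each with
the sign of `f̂ - f*`) such that `f* + C` is feasible and `0 ≤ c·C ≤ ε`. Among the optimal flows `f`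
for which `f + C` is feasible, one minimising `C ⬝ᵥ f` cannot be moved against `C`, so `f - C`
violates a capacity: on some edge `e`, `f e = 0` and `C e = 1`, or `f e = u e` and `C e = -1`.
Hence the event is covered by `2m` events "an optimal flow with `f e = k` is within `ε` of a
feasible flow with `f e = k ± 1`". With all costs but `c e` fixed, changing `c e` by `t` shifts
the cost of such flows by `t k` and `t (k ± 1)` respectively, so the values of `c e` where such
an event occurs form a set of diameter at most `ε`, of probability at most `φ ε`.
-/

open Function Matrix
open scoped ENNReal

theorem Function.exists_iterate_mem_periodicPts {α : Type*} [Finite α] (f : α → α) (x : α) :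
    ∃ n, f^[n] x ∈ periodicPts f := by
  obtain ⟨m, n, hne, heq⟩ := Finite.exists_ne_map_eq_of_infinite fun n => f^[n] x
  wlog hmn : m < n generalizing m n
  · exact this n m hne.symm heq.symm (lt_of_le_of_ne (not_lt.mp hmn) hne.symm)
  refine ⟨m, mk_mem_periodicPts (Nat.sub_pos_of_lt hmn) ?_⟩
  rw [IsPeriodicPt, IsFixedPt, ← iterate_add_apply, Nat.sub_add_cancel hmn.le]
  exact heq.symm

theorem MeasureTheory.Measure.pi_le_of_forall_update_le {ι : Type*} [Fintype ι] [DecidableEq ι]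
    {X : ι → Type*} [∀ i, MeasurableSpace (X i)] (μ : ∀ i, Measure (X i))
    [∀ i, IsProbabilityMeasure (μ i)] {A : Set (∀ i, X i)} (hA : MeasurableSet A) (i : ι)
    {r : ℝ≥0∞} (h : ∀ x, μ i {t | update x i t ∈ A} ≤ r) :
    Measure.pi μ A ≤ r := by
  have hsection : ∀ x, ∫⁻ t, A.indicator 1 (update x i t) ∂μ i ≤ ∫⁻ _, r ∂μ i := fun x => by
    rw [show (fun t => A.indicator 1 (update x i t)) = (update x i ⁻¹' A).indicator 1 from
        funext fun t => (Set.indicator_comp_right _).symm,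
      lintegral_indicator_one (measurable_update x hA), lintegral_const, measure_univ, mul_one]
    exact h x
  calc Measure.pi μ A = ∫⁻ x, A.indicator 1 x ∂Measure.pi μ := (lintegral_indicator_one hA).symm
    _ ≤ ∫⁻ _, r ∂Measure.pi μ :=
      lintegral_le_of_lmarginal_le {i} (measurable_one.indicator hA) measurable_const
        (by rw [lmarginal_singleton, lmarginal_singleton]; exact hsection)
    _ = r := by simp

theorem withDensity_volume_le_mul_ediam {g : ℝ → ℝ≥0∞} {a : ℝ≥0∞} (hg : ∀ x, g x ≤ a)
    (s : Set ℝ) : volume.withDensity g s ≤ a * Metric.ediam s :=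
  calc volume.withDensity g s = ∫⁻ x in s, g x := withDensity_apply' g s
    _ ≤ ∫⁻ _ in s, a := lintegral_mono hg
    _ = a * volume s := setLIntegral_const s a
    _ ≤ a * Metric.ediam s := by gcongr; exact Real.volume_le_diam s

section Incidence

variable {V E : Type} [DecidableEq V] (src tgt : E → V)

def incidence : Matrix V E ℤ :=
  fun v e => (if src e = v then 1 else 0) - (if tgt e = v then 1 else 0)

variable [Fintype E]

theorem incidence_mulVec_apply (x : E → ℤ) (v : V) :
    (incidence src tgt *ᵥ x) v =
      (∑ e, if src e = v then x e else 0) - (∑ e, if tgt e = v then x e else 0) := by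
  simp [mulVec, dotProduct, incidence, sub_mul, ite_mul, Finset.sum_sub_distrib]

theorem incidence_reorient_mulVec (p : E → Prop) [DecidablePred p] (x : E → ℤ) :
    incidence (fun e => if p e then tgt e else src e) (fun e => if p e then src e else tgt e) *ᵥ x =
      incidence src tgt *ᵥ fun e => if p e then -x e else x e := by
  ext v
  refine Finset.sum_congr rfl fun e _ => ?_
  by_cases he : p e <;> simp [incidence, he]
  ring

variable {src tgt}

theorem exists_succ_of_nonneg {D : E → ℤ} (hD : incidence src tgt *ᵥ D = 0) (hnonneg : 0 ≤ D)
    {e : E} (he : 0 < D e) : ∃ e', 0 < D e' ∧ src e' = tgt e := by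
  have hbal := congrFun hD (tgt e)
  rw [incidence_mulVec_apply, Pi.zero_apply, sub_eq_zero] at hbal
  have hin : D e ≤ ∑ e', if tgt e' = tgt e then D e' else 0 := by
    refine le_of_eq_of_le (if_pos rfl).symm
      (Finset.single_le_sum (f := fun e' => if tgt e' = tgt e then D e' else 0)
        (fun e' _ => ?_) (Finset.mem_univ e))
    split_ifs
    exacts [hnonneg e', le_rfl]
  obtain ⟨e', -, hlt⟩ := Finset.exists_lt_of_sum_lt (s := Finset.univ) (f := fun _ => (0 : ℤ))
    (by rw [hbal, Finset.sum_const_zero]; exact he.trans_le hin)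
  split_ifs at hlt with hsrc
  exacts [⟨e', hlt, hsrc⟩, absurd hlt (lt_irrefl 0)]

theorem incidence_mulVec_indicator_eq_zero [DecidableEq E] {S : Finset E} {σ : E → E}
    (hσ : Set.BijOn σ S S) (hσsrc : ∀ e ∈ S, src (σ e) = tgt e) :
    incidence src tgt *ᵥ (fun e => if e ∈ S then 1 else 0) = 0 := by
  have hsum (st : E → V) (v : V) : (∑ e, if st e = v then (if e ∈ S then 1 else 0) else 0) =
      ∑ e ∈ S, if st e = v then (1 : ℤ) else 0 := by
    rw [← Finset.sum_filter, ← Finset.sum_filter, ← Finset.sum_filter, Finset.filter_comm,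
      Finset.filter_mem_eq_inter, Finset.univ_inter]
  ext v
  rw [incidence_mulVec_apply, hsum, hsum, Pi.zero_apply, sub_eq_zero]
  exact (Finset.sum_nbij σ hσ.mapsTo hσ.injOn hσ.surjOn fun e he => by rw [hσsrc e he]).symm

end Incidence

section Cycle
variable {V E : Type} [DecidableEq V] [Fintype E] {src tgt : E → V}

theorem exists_cycle_of_nonneg {D : E → ℤ} (hD : incidence src tgt *ᵥ D = 0) (hnonneg : 0 ≤ D)
    (hne : D ≠ 0) : ∃ C : E → ℤ, C ≠ 0 ∧ incidence src tgt *ᵥ C = 0 ∧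
      ∀ e, C e = 0 ∨ (C e = 1 ∧ 0 < D e) := by
  classical
  have hsucc (e : E) : ∃ e', (0 < D e → 0 < D e' ∧ src e' = tgt e) ∧ (¬ 0 < D e → e' = e) := by
    by_cases he : 0 < D e
    · obtain ⟨e', h⟩ := exists_succ_of_nonneg hD hnonneg he
      exact ⟨e', fun _ => h, fun h' => absurd he h'⟩
    · exact ⟨e, fun h => absurd h he, fun _ => rfl⟩
  -- `σ` follows each edge of the support by one leaving its head and fixes all other edges, so its
  -- periodic points in the support form disjoint cycles
  choose σ hσ hσfix using hsucc
  have hmaps : Set.MapsTo σ {e | 0 < D e} {e | 0 < D e} := fun e he => (hσ e he).1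
  let S : Finset E := (periodicPts σ ∩ {e | 0 < D e}).toFinset
  have hS : Set.BijOn σ S S := by
    simp only [S, Set.coe_toFinset]
    refine ⟨fun e he => ⟨(bijOn_periodicPts σ).mapsTo he.1, hmaps he.2⟩,
      (bijOn_periodicPts σ).injOn.mono Set.inter_subset_left, fun e he => ?_⟩
    obtain ⟨e', he', rfl⟩ := (bijOn_periodicPts σ).surjOn he.1
    by_cases hpos : 0 < D e'
    · exact ⟨e', ⟨he', hpos⟩, rfl⟩
    · exact absurd (hσfix e' hpos ▸ he.2) hpos
  obtain ⟨e₀, he₀⟩ : ∃ e, D e ≠ 0 := Function.ne_iff.mp hne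
  obtain ⟨n, hn⟩ := exists_iterate_mem_periodicPts σ e₀
  have hmem : σ^[n] e₀ ∈ S :=
    Set.mem_toFinset.mpr ⟨hn, hmaps.iterate n (lt_of_le_of_ne (hnonneg e₀) he₀.symm)⟩
  refine ⟨fun e => if e ∈ S then 1 else 0, fun h => by simpa [hmem] using congrFun h (σ^[n] e₀),
    incidence_mulVec_indicator_eq_zero hS fun e he => (hσ e (Set.mem_toFinset.mp he).2).2,
    fun e => ?_⟩
  by_cases he : e ∈ S
  · exact Or.inr ⟨if_pos he, (Set.mem_toFinset.mp he).2⟩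
  · exact Or.inl (if_neg he)

theorem exists_conformal_cycle {D : E → ℤ} (hD : incidence src tgt *ᵥ D = 0) (hne : D ≠ 0) :
    ∃ C : E → ℤ, C ≠ 0 ∧ incidence src tgt *ᵥ C = 0 ∧ ∀ e, C e = 0 ∨ C e = Int.sign (D e) := by
  -- reversing the edges where `D < 0` turns `D` into the nonnegative circulation `|D|`
  have habs : incidence (fun e => if D e < 0 then tgt e else src e)
      (fun e => if D e < 0 then src e else tgt e) *ᵥ (fun e => |D e|) = 0 := by
    rw [incidence_reorient_mulVec, ← hD]
    congr 1
    ext e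
    split_ifs with h
    · rw [abs_of_neg h, neg_neg]
    · rw [abs_of_nonneg (not_lt.mp h)]
  obtain ⟨C, hC0, hC, hCunit⟩ := exists_cycle_of_nonneg habs (fun e => abs_nonneg (D e))
    (fun h => hne (funext fun e => abs_eq_zero.mp (congrFun h e)))
  rw [incidence_reorient_mulVec] at hC
  refine ⟨_, fun h => hC0 (funext fun e => ?_), hC, fun e => ?_⟩
  · have := congrFun h e
    split_ifs at this <;> simp_all
  · rcases hCunit e with h0 | ⟨h1, hpos⟩
    · simp [h0]
    · rcases lt_trichotomy (D e) 0 with h | h | h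
      · simp [h, h1, Int.sign_eq_neg_one_of_neg h]
      · simp [h] at hpos
      · simp [h.not_gt, h1, Int.sign_eq_one_of_pos h]

end Cycle

section Flow
variable {V E : Type} [DecidableEq V] [Fintype E] {src tgt : E → V} {cap : E → ℕ} {bdg : V → ℤ}
  {c : E → ℝ} {f g C D : E → ℤ}

theorem flowCost_add (c : E → ℝ) (f g : E → ℤ) :
    flowCost c (f + g) = flowCost c f + flowCost c g := by
  simp only [flowCost, Pi.add_apply, Int.cast_add, mul_add, Finset.sum_add_distrib]

theorem flowCost_sub (c : E → ℝ) (f g : E → ℤ) :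
    flowCost c (f - g) = flowCost c f - flowCost c g := by
  simp only [flowCost, Pi.sub_apply, Int.cast_sub, mul_sub, Finset.sum_sub_distrib]

theorem isFlow_iff : IsFlow src tgt cap bdg f ↔
    (∀ e, 0 ≤ f e ∧ f e ≤ cap e) ∧ incidence src tgt *ᵥ f = bdg := by
  simp only [IsFlow, funext_iff, incidence_mulVec_apply]

theorem finite_setOf_isFlow : {f | IsFlow src tgt cap bdg f}.Finite :=
  (Set.Finite.pi fun e => Set.finite_Icc (0 : ℤ) (cap e)).subset fun _ hf e _ => hf.1 e

variable (src tgt cap bdg) in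
def IsMinCostFlow (c : E → ℝ) (f : E → ℤ) : Prop :=
  IsFlow src tgt cap bdg f ∧ ∀ g, IsFlow src tgt cap bdg g → flowCost c f ≤ flowCost c g

theorem IsFlow.add_of_conformal (hf : IsFlow src tgt cap bdg f)
    (hfD : IsFlow src tgt cap bdg (f + D)) (hC : incidence src tgt *ᵥ C = 0)
    (hconf : ∀ e, C e = 0 ∨ C e = Int.sign (D e)) : IsFlow src tgt cap bdg (f + C) := by
  rw [isFlow_iff] at hf hfD ⊢
  refine ⟨fun e => ?_, by rw [mulVec_add, hf.2, hC, add_zero]⟩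
  have hfe := hf.1 e
  have hfDe := hfD.1 e
  simp only [Pi.add_apply] at hfDe ⊢
  rcases hconf e with h | h <;> rw [h]
  · omega
  · rcases lt_trichotomy (D e) 0 with hD | hD | hD
    · rw [Int.sign_eq_neg_one_of_neg hD]; omega
    · rw [hD, Int.sign_zero]; omega
    · rw [Int.sign_eq_one_of_pos hD]; omega

theorem IsMinCostFlow.exists_cycle (hf : IsMinCostFlow src tgt cap bdg c f)
    (hg : IsFlow src tgt cap bdg g) (hne : g ≠ f) :
    ∃ C : E → ℤ, C ≠ 0 ∧ (∀ e, |C e| ≤ 1) ∧ IsFlow src tgt cap bdg (f + C) ∧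
      flowCost c C ≤ flowCost c g - flowCost c f := by
  have hD : incidence src tgt *ᵥ (g - f) = 0 := by
    rw [mulVec_sub, (isFlow_iff.mp hg).2, (isFlow_iff.mp hf.1).2, sub_self]
  obtain ⟨C, hC0, hC, hconf⟩ := exists_conformal_cycle hD (sub_ne_zero.mpr hne)
  have hfC : IsFlow src tgt cap bdg (f + C) :=
    hf.1.add_of_conformal (by rwa [add_sub_cancel]) hC hconf
  have hgC : IsFlow src tgt cap bdg (g + -C) :=
    hg.add_of_conformal (D := f - g) (by rw [add_sub_cancel]; exact hf.1)
      (by rw [mulVec_neg, hC, neg_zero])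
      fun e => by rcases hconf e with h | h <;> simp [h, ← Int.sign_neg]
  refine ⟨C, hC0, fun e => ?_, hfC, ?_⟩
  · rcases hconf e with h | h <;> rw [h]
    · simp
    · rcases Int.sign_trichotomy ((g - f) e) with h' | h' | h' <;> rw [h'] <;> norm_num
  · have := hf.2 _ hgC
    rw [← sub_eq_add_neg, flowCost_sub] at this
    linarith

theorem exists_isMinCostFlow_not_isFlow_sub (hC : C ≠ 0) (hf : IsMinCostFlow src tgt cap bdg c f)
    (hfC : IsFlow src tgt cap bdg (f + C)) :
    ∃ f', IsMinCostFlow src tgt cap bdg c f' ∧ IsFlow src tgt cap bdg (f' + C) ∧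
      ¬ IsFlow src tgt cap bdg (f' - C) := by
  let S := {f' | IsMinCostFlow src tgt cap bdg c f' ∧ IsFlow src tgt cap bdg (f' + C)}
  have hS : S.Finite := finite_setOf_isFlow.subset fun f' hf' => hf'.1.1
  obtain ⟨f', ⟨hf', hf'C⟩, hmin⟩ := S.exists_min_image (C ⬝ᵥ ·) hS ⟨f, hf, hfC⟩
  refine ⟨f', hf', hf'C, fun hf'C' => ?_⟩
  -- moving from `f'` against `C` would keep the cost and decrease `C ⬝ᵥ f'`
  have hcost : flowCost c C = 0 := by
    have h₁ := hf'.2 _ hf'C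
    have h₂ := hf'.2 _ hf'C'
    rw [flowCost_add] at h₁
    rw [flowCost_sub] at h₂
    linarith
  have hopt : IsMinCostFlow src tgt cap bdg c (f' - C) :=
    ⟨hf'C', fun g hg => by rw [flowCost_sub, hcost, sub_zero]; exact hf'.2 g hg⟩
  have hle := hmin (f' - C) ⟨hopt, by rw [sub_add_cancel]; exact hf'.1⟩
  rw [dotProduct_sub, le_sub_self_iff] at hle
  exact hC (dotProduct_self_eq_zero.mp
    (hle.antisymm (Finset.sum_nonneg fun e _ => mul_self_nonneg (C e))))

theorem IsFlow.exists_saturated (hf : IsFlow src tgt cap bdg f)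
    (hfC : IsFlow src tgt cap bdg (f + C)) (hf'C : ¬ IsFlow src tgt cap bdg (f - C))
    (hC : ∀ e, |C e| ≤ 1) : ∃ e, (f e = 0 ∧ C e = 1) ∨ (f e = cap e ∧ C e = -1) := by
  rw [isFlow_iff] at hf hfC hf'C
  by_contra! hnot
  refine hf'C ⟨fun e => ?_, ?_⟩
  · have := hf.1 e
    have := hfC.1 e
    have := abs_le.mp (hC e)
    have := hnot e
    simp only [Pi.add_apply, Pi.sub_apply] at *
    omega
  · rw [show f - C = f + f - (f + C) by abel, mulVec_sub, mulVec_add, hf.2, hfC.2,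
      add_sub_cancel_right]

end Flow

section NearTie
variable {V E : Type} [DecidableEq V] [Fintype E] {src tgt : E → V} {cap : E → ℕ} {bdg : V → ℤ}

variable (src tgt cap bdg) in
def nearTieSet (ε : ℝ) (e : E) (k d : ℤ) : Set (E → ℝ) :=
  {c | ∃ f g, IsMinCostFlow src tgt cap bdg c f ∧ IsFlow src tgt cap bdg g ∧ f e = k ∧
    g e = k + d ∧ flowCost c g - flowCost c f ≤ ε}

@[fun_prop]
theorem measurable_flowCost (f : E → ℤ) : Measurable fun c : E → ℝ => flowCost c f := by
  unfold flowCost; fun_prop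

theorem measurableSet_nearTieSet (ε : ℝ) (e : E) (k d : ℤ) :
    MeasurableSet (nearTieSet src tgt cap bdg ε e k d) := by
  unfold nearTieSet IsMinCostFlow
  refine measurableSet_setOfPred.mpr ?_
  fun_prop

theorem setOf_near_optimal_subset_iUnion_nearTieSet (ε : ℝ) :
    {c : E → ℝ | ∃ fstar fhat : E → ℤ, IsFlow src tgt cap bdg fstar ∧
        (∀ f, IsFlow src tgt cap bdg f → flowCost c fstar ≤ flowCost c f) ∧
        IsFlow src tgt cap bdg fhat ∧ fhat ≠ fstar ∧ flowCost c fhat - flowCost c fstar ≤ ε} ⊆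
      ⋃ e, (nearTieSet src tgt cap bdg ε e 0 1 ∪ nearTieSet src tgt cap bdg ε e (cap e) (-1)) := by
  rintro c ⟨f, g, hf, hopt, hg, hne, hgap⟩
  obtain ⟨C, hC0, hC1, hfC, hcost⟩ := IsMinCostFlow.exists_cycle ⟨hf, hopt⟩ hg hne
  obtain ⟨f', hf', hf'C, hf'C'⟩ := exists_isMinCostFlow_not_isFlow_sub hC0 ⟨hf, hopt⟩ hfC
  have hgap' : flowCost c (f' + C) - flowCost c f' ≤ ε := by rw [flowCost_add]; linarith
  obtain ⟨e, ⟨hfe, hCe⟩ | ⟨hfe, hCe⟩⟩ := hf'.1.exists_saturated hf'C hf'C' hC1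
  · exact Set.mem_iUnion.mpr ⟨e, Or.inl ⟨f', f' + C, hf', hf'C, hfe, by simp [hfe, hCe], hgap'⟩⟩
  · exact Set.mem_iUnion.mpr
      ⟨e, Or.inr ⟨f', f' + C, hf', hf'C, hfe, by simp [hfe, hCe], hgap'⟩⟩

variable [DecidableEq E]

theorem flowCost_update (c : E → ℝ) (e : E) (t : ℝ) (f : E → ℤ) :
    flowCost (Function.update c e t) f = flowCost c f + (t - c e) * f e := by
  rw [show Function.update c e t = c + Pi.single e (t - c e) by
    ext x; by_cases hx : x = e <;> simp [hx]]
  simp [flowCost, add_mul, Finset.sum_add_distrib, Pi.single_apply, ite_mul]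

theorem sub_mul_le_of_update_mem_nearTieSet {ε : ℝ} {e : E} {k d : ℤ} {y : E → ℝ} {t t' : ℝ}
    (ht : Function.update y e t ∈ nearTieSet src tgt cap bdg ε e k d)
    (ht' : Function.update y e t' ∈ nearTieSet src tgt cap bdg ε e k d) :
    (t' - t) * d ≤ ε := by
  obtain ⟨f, -, hf, -, hfe, -, -⟩ := ht
  obtain ⟨f', g', hf', hg', hf'e, hg'e, hgap⟩ := ht'
  have h₁ := hf.2 g' hg'
  have h₂ := hf'.2 f hf.1
  simp only [flowCost_update, hfe, hf'e, hg'e, Int.cast_add] at h₁ h₂ hgap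
  linear_combination h₁ + h₂ + hgap

theorem abs_sub_le_of_update_mem_nearTieSet {ε : ℝ} {e : E} {k d : ℤ} (hd : d ≠ 0) {y : E → ℝ}
    {t t' : ℝ} (ht : Function.update y e t ∈ nearTieSet src tgt cap bdg ε e k d)
    (ht' : Function.update y e t' ∈ nearTieSet src tgt cap bdg ε e k d) :
    |t - t'| ≤ ε := by
  have h₁ := sub_mul_le_of_update_mem_nearTieSet ht ht'
  have h₂ := sub_mul_le_of_update_mem_nearTieSet ht' ht
  calc |t - t'| ≤ |t - t'| * |(d : ℝ)| :=
        le_mul_of_one_le_right (abs_nonneg _) (by exact_mod_cast Int.one_le_abs hd)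
    _ = |(t - t') * d| := (abs_mul _ _).symm
    _ ≤ ε := abs_le.mpr ⟨by linarith, by linarith⟩

variable (src tgt cap bdg) in
theorem pi_nearTieSet_le (μ : E → Measure ℝ)
    [∀ e, IsProbabilityMeasure (μ e)] {a : ℝ≥0∞} (hμ : ∀ e s, μ e s ≤ a * Metric.ediam s)
    (ε : ℝ) (e : E) (k : ℤ) {d : ℤ} (hd : d ≠ 0) :
    Measure.pi μ (nearTieSet src tgt cap bdg ε e k d) ≤ a * ENNReal.ofReal ε := by
  refine Measure.pi_le_of_forall_update_le μ (measurableSet_nearTieSet ε e k d) e fun y =>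
    (hμ e _).trans ?_
  gcongr
  refine Metric.ediam_le fun t ht t' ht' => ?_
  rw [edist_dist, Real.dist_eq]
  exact ENNReal.ofReal_le_ofReal (abs_sub_le_of_update_mem_nearTieSet hd ht ht')

end NearTie

theorem min_cost_flow_isolation_general
    {V E : Type} [Fintype E] [DecidableEq V]
    (src tgt : E → V) (cap : E → ℕ) (bdg : V → ℤ)
    (φ ε : ℝ) (hε : 0 ≤ ε)
    (g : E → ℝ → ENNReal)
    (hgbound : ∀ e x, g e x ≤ ENNReal.ofReal φ)
    (hgprob : ∀ e, IsProbabilityMeasure ((volume : Measure ℝ).withDensity (g e))) :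
    Measure.pi (fun e : E => (volume : Measure ℝ).withDensity (g e))
      {c : E → ℝ | ∃ fstar fhat : E → ℤ,
        IsFlow src tgt cap bdg fstar ∧
        (∀ f, IsFlow src tgt cap bdg f → flowCost c fstar ≤ flowCost c f) ∧
        IsFlow src tgt cap bdg fhat ∧ fhat ≠ fstar ∧
        flowCost c fhat - flowCost c fstar ≤ ε} ≤
      ENNReal.ofReal (2 * ε * φ * (Fintype.card E)) := by
  classical
  have hbound (e : E) (k : ℤ) {d : ℤ} (hd : d ≠ 0) :=
    pi_nearTieSet_le src tgt cap bdg _ (fun e => withDensity_volume_le_mul_ediam (hgbound e))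
      ε e k hd
  calc _ ≤ _ := measure_mono (setOf_near_optimal_subset_iUnion_nearTieSet ε)
    _ ≤ _ := measure_iUnion_fintype_le _ _
    _ ≤ ∑ _e : E, 2 * (ENNReal.ofReal φ * ENNReal.ofReal ε) := Finset.sum_le_sum fun e _ =>
        (measure_union_le _ _).trans <| by
          rw [two_mul]; exact add_le_add (hbound e 0 one_ne_zero) (hbound e (cap e) (by norm_num))
    _ = ENNReal.ofReal (2 * ε * φ * (Fintype.card E)) := by
        rw [Finset.sum_const, Finset.card_univ, nsmul_eq_mul, ← ENNReal.ofReal_mul' hε,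
          ← ENNReal.ofReal_natCast, ← ENNReal.ofReal_ofNat 2, ← ENNReal.ofReal_mul zero_le_two,
          ← ENNReal.ofReal_mul (Nat.cast_nonneg _)]
        ring_nf

/-- **Isolation lemma for min-cost flow.** If the edge costs are independent random
variables with values in `[0,1]` whose densities are bounded by `φ`, and there are at
least two feasible integer flows, then the probability that the cost of a second-best
integer flow exceeds the cost of an optimal integer flow `f*` by at most `ε` is at most
`2 ε φ m`. -/
theorem min_cost_flow_isolation
    {V E : Type} [Fintype V] [Fintype E] [DecidableEq V]
    (src tgt : E → V) (cap : E → ℕ) (bdg : V → ℤ)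
    (φ ε : ℝ) (hε : 0 ≤ ε)
    (g : E → ℝ → ENNReal)
    (hgmeas : ∀ e, Measurable (g e))
    (hgbound : ∀ e x, g e x ≤ ENNReal.ofReal φ)
    (hgsupp : ∀ e x, x ∉ Set.Icc (0 : ℝ) 1 → g e x = 0)
    (hgprob : ∀ e, IsProbabilityMeasure ((volume : Measure ℝ).withDensity (g e)))
    (htwo : ∃ f₁ f₂ : E → ℤ, IsFlow src tgt cap bdg f₁ ∧ IsFlow src tgt cap bdg f₂ ∧ f₁ ≠ f₂) :
    Measure.pi (fun e : E => (volume : Measure ℝ).withDensity (g e))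
      {c : E → ℝ | ∃ fstar fhat : E → ℤ,
        IsFlow src tgt cap bdg fstar ∧
        (∀ f, IsFlow src tgt cap bdg f → flowCost c fstar ≤ flowCost c f) ∧
        IsFlow src tgt cap bdg fhat ∧ fhat ≠ fstar ∧
        flowCost c fhat - flowCost c fstar ≤ ε} ≤
      ENNReal.ofReal (2 * ε * φ * (Fintype.card E)) :=
  min_cost_flow_isolation_general src tgt cap bdg φ ε hε g hgbound hgprob
end

section
/- Fix an edge e of a min-cost flow instance, fix arbitrary real costs c_{e'} for all edges e' ≠ e, and fix ε ≥ 0. Let I ⊆ [0,1] be the set of values of c_e for which the event E'_ε^e occurs. Then I is contained in an interval of length at most ε. -/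
open MeasureTheory

/-- The event `E_ε^e`: there exist two different feasible integer flows `f*` and `f̂`
such that `f*` is optimal, `c·f̂ ≤ c·f* + ε`, `f*_e = 0` and `f̂_e > 0`. -/
def EventZero {V E : Type} [Fintype E] [DecidableEq V]
    (src tgt : E → V) (cap : E → ℕ) (bdg : V → ℤ) (ε : ℝ) (e : E) (c : E → ℝ) : Prop :=
  ∃ fstar fhat : E → ℤ,
    IsFlow src tgt cap bdg fstar ∧ IsFlow src tgt cap bdg fhat ∧ fstar ≠ fhat ∧
    (∀ f, IsFlow src tgt cap bdg f → flowCost c fstar ≤ flowCost c f) ∧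
    flowCost c fhat ≤ flowCost c fstar + ε ∧
    fstar e = 0 ∧ 0 < fhat e

/-- The event `E'_ε^e`: there exist two different feasible integer flows `f*` and `f̂`
such that `f*` is optimal, `c·f̂ ≤ c·f* + ε`, `f*_e = u_e` and `f̂_e < u_e`. -/
def EventCap {V E : Type} [Fintype E] [DecidableEq V]
    (src tgt : E → V) (cap : E → ℕ) (bdg : V → ℤ) (ε : ℝ) (e : E) (c : E → ℝ) : Prop :=
  ∃ fstar fhat : E → ℤ,
    IsFlow src tgt cap bdg fstar ∧ IsFlow src tgt cap bdg fhat ∧ fstar ≠ fhat ∧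
    (∀ f, IsFlow src tgt cap bdg f → flowCost c fstar ≤ flowCost c f) ∧
    flowCost c fhat ≤ flowCost c fstar + ε ∧
    fstar e = (cap e : ℤ) ∧ fhat e < (cap e : ℤ)

private lemma cost_update {E : Type} [Fintype E] [DecidableEq E]
    (c : E → ℝ) (e₀ : E) (z : ℝ) (f : E → ℤ) :
    flowCost (Function.update c e₀ z) f =
      z * (f e₀ : ℝ) + ∑ e ∈ Finset.univ.erase e₀, c e * (f e : ℝ) := by
  unfold flowCost
  rw [← Finset.add_sum_erase _ _ (Finset.mem_univ e₀)]
  congr 1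
  · simp
  · exact Finset.sum_congr rfl fun e he => by
      rw [Function.update_of_ne (Finset.ne_of_mem_erase he)]

private lemma key_ineq {V E : Type} [Fintype V] [Fintype E] [DecidableEq V] [DecidableEq E]
    (src tgt : E → V) (cap : E → ℕ) (bdg : V → ℤ) (ε : ℝ) (e₀ : E) (c : E → ℝ)
    {x y : ℝ} (hxy : x ≤ y)
    (hx : EventCap src tgt cap bdg ε e₀ (Function.update c e₀ x))
    (hy : EventCap src tgt cap bdg ε e₀ (Function.update c e₀ y)) :
    y ≤ x + ε := by
  obtain ⟨fx, gx, hfx, hgx, _, hoptx, hnear, hfxe, hgxe⟩ := hx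
  obtain ⟨fy, _, hfy, _, _, hopty, _, hfye, _⟩ := hy
  have h1 := hopty gx hgx
  have h2 := hoptx fy hfy
  rw [cost_update, cost_update] at h1 h2 hnear
  rw [hfye] at h1 h2
  rw [hfxe] at h2 hnear
  have hk : (gx e₀ : ℝ) + 1 ≤ (cap e₀ : ℝ) := by exact_mod_cast Int.add_one_le_of_lt hgxe
  push_cast at h1 h2 hnear hk
  nlinarith [mul_nonneg (sub_nonneg.2 hxy) (by linarith : (0:ℝ) ≤ (cap e₀ : ℝ) - (gx e₀ : ℝ) - 1)]

/-- Fixing all costs except that of the edge `e₀`, the set of values of `c e₀` in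
`[0,1]` for which the event `E'_ε^{e₀}` occurs is contained in an interval of length
at most `ε`. -/
theorem eventCap_interval
    {V E : Type} [Fintype V] [Fintype E] [DecidableEq V] [DecidableEq E]
    (src tgt : E → V) (cap : E → ℕ) (bdg : V → ℤ)
    (ε : ℝ) (hε : 0 ≤ ε) (e₀ : E) (c : E → ℝ) :
    ∃ a : ℝ,
      {x : ℝ | x ∈ Set.Icc (0 : ℝ) 1 ∧
          EventCap src tgt cap bdg ε e₀ (Function.update c e₀ x)} ⊆
        Set.Icc a (a + ε) := by
  set S := {x : ℝ | x ∈ Set.Icc (0 : ℝ) 1 ∧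
      EventCap src tgt cap bdg ε e₀ (Function.update c e₀ x)} with hSdef
  by_cases hS : S.Nonempty
  · have hbdd : BddBelow S := ⟨0, fun y hy => hy.1.1⟩
    refine ⟨sInf S, fun x hx => ⟨csInf_le hbdd hx, ?_⟩⟩
    have : x - ε ≤ sInf S := by
      apply le_csInf hS
      intro y hy
      rcases le_total y x with h | h
      · have := key_ineq src tgt cap bdg ε e₀ c h hy.2 hx.2
        linarith
      · linarith
    linarith
  · exact ⟨0, fun x hx => absurd ⟨x, hx⟩ hS⟩
end

section
/- Consider the complete bipartite graph K_{2,2} with edge weights w_{11}, w_{12}, w_{21}, w_{22}, let 0 < ε ≤ 1/8, and suppose the event E_ε occurs. Then for every integer k with 0 ≤ k ≤ 1/(8ε) − 1, the belief of node u_1 at the end of iteration 4k of the belief propagation algorithm of Bayati et al. is incorrect: b^{4k}_{u_1}(1) > b^{4k}_{u_1}(2), so the estimated matching at iteration 4k matches u_1 to v_1, whereas the unique maximum-weight matching of K_{2,2} is M_2 = {(u_1,v_2),(u_2,v_1)}. -/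
/-!
On `K_{2,2}` every maximum in the BP updates ranges over a single index, so BP is an affine
recursion. Its messages drift with period four: after four iterations the belief `b_{u_i}(r)`
has grown by four times the weight of the perfect matching through the edge `(u_i, v_r)`.
Hence, with `M₁ = {(u_1,v_1), (u_2,v_2)}`,
`b^{4k}_{u_1}(1) - b^{4k}_{u_1}(2) = 2 (w₁₁ - w₁₂) - 4k (w(M₂) - w(M₁))`.
On `E_ε` the first term is at least `1/2` and `0 < w(M₂) - w(M₁) ≤ ε`, so the wrong edge is
preferred as long as `4kε < 1/2`, although `M₂` is the unique maximum-weight matching.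
-/

open MeasureTheory

/-- The messages of the belief propagation algorithm of Bayati et al. on the complete
bipartite graph `K_{n,n}` with weights `w`. `(BPmsg n w t).1 i j r` is the message
`m⃗ᵗ_{ij}(r)` from `u_i` to `v_j` and `(BPmsg n w t).2 j i r` is the message
`m⃖ᵗ_{ji}(r)` from `v_j` to `u_i` at iteration `t`. (For `n ≤ 1` the maxima over the
empty index set take the junk value `0` of real suprema.) -/
noncomputable def BPmsg (n : ℕ) (w : Fin n → Fin n → ℝ) :
    ℕ → (Fin n → Fin n → Fin n → ℝ) × (Fin n → Fin n → Fin n → ℝ)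
  | 0 =>
    (fun i j r => if r = i then w i j else 0,
     fun j i r => if r = j then w i j else 0)
  | t + 1 =>
    (fun i j r =>
      if r = i then w i j + ∑ k ∈ Finset.univ.filter (· ≠ j), (BPmsg n w t).2 k i j
      else ⨆ q : {q : Fin n // q ≠ j},
        (w i q + ∑ k ∈ Finset.univ.filter (· ≠ j), (BPmsg n w t).2 k i (q : Fin n)),
     fun j i r =>
      if r = j then w i j + ∑ k ∈ Finset.univ.filter (· ≠ i), (BPmsg n w t).1 k j i
      else ⨆ q : {q : Fin n // q ≠ i},
        (w q j + ∑ k ∈ Finset.univ.filter (· ≠ i), (BPmsg n w t).1 k j (q : Fin n)))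

/-- The belief `bᵗ_{u_i}(r)` of node `u_i` at iteration `t`. -/
noncomputable def belief (n : ℕ) (w : Fin n → Fin n → ℝ) (t : ℕ) (i r : Fin n) : ℝ :=
  w i r + ∑ k, (BPmsg n w t).2 k i r

/-- A matching of `K_{n,n}`, given as a set of edges `(i, j)` (meaning `(u_i, v_j)`)
that are pairwise non-adjacent. -/
def IsMatching (n : ℕ) (M : Finset (Fin n × Fin n)) : Prop :=
  ∀ p ∈ M, ∀ q ∈ M, p ≠ q → p.1 ≠ q.1 ∧ p.2 ≠ q.2

/-- The weight of a matching of `K_{n,n}`. -/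
noncomputable def matchingWeight (n : ℕ) (w : Fin n → Fin n → ℝ)
    (M : Finset (Fin n × Fin n)) : ℝ :=
  ∑ p ∈ M, w p.1 p.2

/-- Belief propagation has converged by iteration `t`: there is a unique maximum-weight
matching `M`, and at every iteration `s ≥ t` the estimated matching (matching each `u_i`
to the unique maximizer of its belief) equals `M`. -/
def BPConvergedBy (n : ℕ) (w : Fin n → Fin n → ℝ) (t : ℕ) : Prop :=
  ∃ M : Finset (Fin n × Fin n), IsMatching n M ∧
    (∀ M', IsMatching n M' → M' ≠ M → matchingWeight n w M' < matchingWeight n w M) ∧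
    ∀ s, t ≤ s → ∀ i : Fin n, ∃ j : Fin n, (i, j) ∈ M ∧
      ∀ r : Fin n, r ≠ j → belief n w s i r < belief n w s i j

instance (j : Fin 2) : Unique {q : Fin 2 // q ≠ j} where
  default := ⟨j + 1, by fin_cases j <;> decide⟩
  uniq := by
    rintro ⟨q, hq⟩
    ext
    fin_cases j <;> fin_cases q <;> first | rfl | exact absurd rfl hq

lemma fin_two_univ_filter_ne (j : Fin 2) : Finset.univ.filter (· ≠ j) = {j + 1} := by
  fin_cases j <;> decide

namespace BPmsg

variable (w : Fin 2 → Fin 2 → ℝ) (t : ℕ)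

lemma fst_two_succ (i j r : Fin 2) :
    (BPmsg 2 w (t + 1)).1 i j r =
      if r = i then w i j + (BPmsg 2 w t).2 (j + 1) i j
      else w i (j + 1) + (BPmsg 2 w t).2 (j + 1) i (j + 1) := by
  simp only [BPmsg, fin_two_univ_filter_ne, Finset.sum_singleton, ciSup_unique]
  rfl

lemma snd_two_succ (i j r : Fin 2) :
    (BPmsg 2 w (t + 1)).2 j i r =
      if r = j then w i j + (BPmsg 2 w t).1 (i + 1) j i
      else w (i + 1) j + (BPmsg 2 w t).1 (i + 1) j (i + 1) := by
  simp only [BPmsg, fin_two_univ_filter_ne, Finset.sum_singleton, ciSup_unique]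
  rfl

lemma snd_two_add_two (i j r : Fin 2) :
    (BPmsg 2 w (t + 2)).2 j i r =
      (if r = j then w i j + w (i + 1) (j + 1) else 2 * w (i + 1) j) +
        (BPmsg 2 w t).2 (j + 1) (i + 1) (r + 1) := by
  fin_cases i <;> fin_cases j <;> fin_cases r <;>
    simp [snd_two_succ, fst_two_succ] <;> ring

lemma snd_two_add_four (i j r : Fin 2) :
    (BPmsg 2 w (t + 4)).2 j i r =
      (BPmsg 2 w t).2 j i r +
        2 * (if r = j then w i j + w (i + 1) (j + 1) else w (i + 1) j + w i (j + 1)) := by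
  fin_cases i <;> fin_cases j <;> fin_cases r <;>
    simp [snd_two_add_two] <;> ring

end BPmsg

lemma belief_two_zero (w : Fin 2 → Fin 2 → ℝ) (i r : Fin 2) : belief 2 w 0 i r = 2 * w i r := by
  fin_cases i <;> fin_cases r <;> simp [belief, BPmsg] <;> ring

lemma belief_two_add_four (w : Fin 2 → Fin 2 → ℝ) (t : ℕ) (i r : Fin 2) :
    belief 2 w (t + 4) i r = belief 2 w t i r + 4 * (w i r + w (i + 1) (r + 1)) := by
  fin_cases i <;> fin_cases r <;> simp [belief, BPmsg.snd_two_add_four, Fin.sum_univ_two] <;> ring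

lemma belief_two_four_mul (w : Fin 2 → Fin 2 → ℝ) (k : ℕ) (i r : Fin 2) :
    belief 2 w (4 * k) i r = 2 * w i r + 4 * k * (w i r + w (i + 1) (r + 1)) := by
  induction k with
  | zero => simp [belief_two_zero]
  | succ k ih =>
    rw [mul_add_one, belief_two_add_four, ih]
    push_cast
    ring

lemma matchingWeight_lt_antidiagonal (w : Fin 2 → Fin 2 → ℝ)
    (h01 : 0 < w 0 1) (h10 : 0 < w 1 0) (h00 : w 0 0 < w 0 1 + w 1 0)
    (h11 : w 1 1 < w 0 1 + w 1 0) (hdiag : w 0 0 + w 1 1 < w 0 1 + w 1 0)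
    (M : Finset (Fin 2 × Fin 2)) (hM : IsMatching 2 M) (hne : M ≠ {(0, 1), (1, 0)}) :
    matchingWeight 2 w M < matchingWeight 2 w {(0, 1), (1, 0)} := by
  unfold IsMatching at hM
  fin_cases M <;> first
    | exact absurd hM (by decide)
    | exact absurd rfl hne
    | (simp [matchingWeight]; linarith)

-- `w i j` is the weight of the edge `(u_{i+1}, v_{j+1})`.
theorem bp_K22_false_belief_general
    (ε : ℝ)
    (w : Fin 2 → Fin 2 → ℝ)
    (h11 : w 0 0 ∈ Set.Icc (7 / 8 : ℝ) 1)
    (h12 : w 0 1 ∈ Set.Ioc (1 / 2 : ℝ) (5 / 8))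
    (h21 : w 1 0 ∈ Set.Ioc (5 / 8 : ℝ) (3 / 4))
    (h22 : w 1 1 ∈ Set.Ico (w 0 1 + w 1 0 - w 0 0 - ε) (w 0 1 + w 1 0 - w 0 0)) :
    ∀ k : ℕ, (k : ℝ) ≤ 1 / (8 * ε) - 1 →
      belief 2 w (4 * k) 0 1 < belief 2 w (4 * k) 0 0 ∧
      IsMatching 2 {((0 : Fin 2), (1 : Fin 2)), ((1 : Fin 2), (0 : Fin 2))} ∧
      (∀ M : Finset (Fin 2 × Fin 2), IsMatching 2 M →
        M ≠ {((0 : Fin 2), (1 : Fin 2)), ((1 : Fin 2), (0 : Fin 2))} →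
        matchingWeight 2 w M <
          matchingWeight 2 w {((0 : Fin 2), (1 : Fin 2)), ((1 : Fin 2), (0 : Fin 2))}) := by
  intro k hk
  obtain ⟨h00_lb, h00_ub⟩ := h11
  obtain ⟨h01_lb, h01_ub⟩ := h12
  obtain ⟨h10_lb, -⟩ := h21
  obtain ⟨h11_lb, h11_ub⟩ := h22
  have hε : 0 < ε := by linarith
  have hkε : 8 * ε * k ≤ 1 - 8 * ε := by
    rw [le_sub_iff_add_le, le_div_iff₀ (by positivity)] at hk
    linarith
  refine ⟨?_, by unfold IsMatching; decide, matchingWeight_lt_antidiagonal w ?_ ?_ ?_ ?_ ?_⟩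
  · rw [belief_two_four_mul, belief_two_four_mul]
    have hdrift : 4 * k * (w 0 1 + w 1 0 - w 0 0 - w 1 1) ≤ 4 * k * ε :=
      mul_le_mul_of_nonneg_left (by linarith) (by positivity)
    simp only [zero_add, Fin.reduceAdd]
    linarith
  all_goals linarith

/-- If the event `E_ε` occurs for `K_{2,2}` (with `w i j` the weight of the edge
`(u_{i+1}, v_{j+1})`), then for every integer `k ≤ 1/(8ε) - 1` the belief of node
`u_1` at the end of iteration `4k` is incorrect: `b^{4k}_{u_1}(1) > b^{4k}_{u_1}(2)`,
so the estimated matching matches `u_1` to `v_1`, whereas the unique maximum-weight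
matching is `M₂ = {(u_1,v_2), (u_2,v_1)}`. -/
theorem bp_K22_false_belief
    (ε : ℝ) (hε₀ : 0 < ε) (hε₁ : ε ≤ 1 / 8)
    (w : Fin 2 → Fin 2 → ℝ)
    (h11 : w 0 0 ∈ Set.Icc (7 / 8 : ℝ) 1)
    (h12 : w 0 1 ∈ Set.Ioc (1 / 2 : ℝ) (5 / 8))
    (h21 : w 1 0 ∈ Set.Ioc (5 / 8 : ℝ) (3 / 4))
    (h22 : w 1 1 ∈ Set.Ico (w 0 1 + w 1 0 - w 0 0 - ε) (w 0 1 + w 1 0 - w 0 0)) :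
    ∀ k : ℕ, (k : ℝ) ≤ 1 / (8 * ε) - 1 →
      belief 2 w (4 * k) 0 1 < belief 2 w (4 * k) 0 0 ∧
      IsMatching 2 {((0 : Fin 2), (1 : Fin 2)), ((1 : Fin 2), (0 : Fin 2))} ∧
      (∀ M : Finset (Fin 2 × Fin 2), IsMatching 2 M →
        M ≠ {((0 : Fin 2), (1 : Fin 2)), ((1 : Fin 2), (0 : Fin 2))} →
        matchingWeight 2 w M <
          matchingWeight 2 w {((0 : Fin 2), (1 : Fin 2)), ((1 : Fin 2), (0 : Fin 2))}) :=
  bp_K22_false_belief_general ε w h11 h12 h21 h22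
end

section
/- Consider the complete bipartite graph K_{2,2} with edge weights drawn independently and uniformly from [0,1], and let τ be the number of iterations until the belief propagation algorithm of Bayati et al. for maximum-weight matching converges. Then there exists a constant c > 0 such that for every t ≥ 1, the probability that τ ≥ t is at least 1/(ct). -/
open MeasureTheory

noncomputable abbrev nu : Measure ℝ := (volume : Measure ℝ).restrict (Set.Icc 0 1)

lemma nu_Ioo {a b : ℝ} (h0 : 0 ≤ a) (h1 : b ≤ 1) :
    nu (Set.Ioo a b) = ENNReal.ofReal (b - a) := by
  rw [Measure.restrict_apply measurableSet_Ioo,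
    Set.inter_eq_self_of_subset_left (fun x hx => Set.mem_Icc.2 ⟨le_of_lt (lt_of_le_of_lt h0 hx.1), le_of_lt (lt_of_lt_of_le hx.2 h1)⟩)]
  exact Real.volume_Ioo

lemma measure_prism (ε : ℝ) (hε : 0 < ε) (hε9 : ε ≤ 1/9) :
    ENNReal.ofReal ε * ENNReal.ofReal (1/4096) ≤
      Measure.pi (fun _ : Fin 2 × Fin 2 => nu)
        {w : Fin 2 × Fin 2 → ℝ |
          w (0,1) ∈ Set.Ioo (0:ℝ) (1/16) ∧ w (1,0) ∈ Set.Ioo (3/4 : ℝ) (13/16) ∧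
          w (1,1) ∈ Set.Ioo (0:ℝ) (1/16) ∧
          w (0,0) ∈ Set.Ioo (w (0,1) + w (1,0) - w (1,1))
            (w (0,1) + w (1,0) - w (1,1) + ε)} := by
  classical
  set S : Set (Fin 2 × Fin 2 → ℝ) :=
    {w | w (0,1) ∈ Set.Ioo (0:ℝ) (1/16) ∧ w (1,0) ∈ Set.Ioo (3/4 : ℝ) (13/16) ∧
         w (1,1) ∈ Set.Ioo (0:ℝ) (1/16) ∧
         w (0,0) ∈ Set.Ioo (w (0,1) + w (1,0) - w (1,1))
            (w (0,1) + w (1,0) - w (1,1) + ε)} with hS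
  have hSm : MeasurableSet S := by
    rw [hS]
    simp only [Set.mem_Ioo, Set.setOf_and]
    repeat' apply MeasurableSet.inter
    all_goals exact measurableSet_lt (by fun_prop) (by fun_prop)
  -- split coordinates
  set e := MeasurableEquiv.piEquivPiSubtypeProd (fun _ : Fin 2 × Fin 2 => ℝ)
    (fun i => i ≠ (0,0)) with he
  have hmp := measurePreserving_piEquivPiSubtypeProd (fun _ : Fin 2 × Fin 2 => nu)
    (fun i => i ≠ (0,0))
  have hpre := (hmp.symm e).measure_preimage_equiv S
  set T := e.symm ⁻¹' S with hT
  have hTm : MeasurableSet T := hSm.preimage e.symm.measurable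
  rw [← hpre, Measure.prod_apply hTm]
  have h01 : ((0,1) : Fin 2 × Fin 2) ≠ (0,0) := by decide
  have h10 : ((1,0) : Fin 2 × Fin 2) ≠ (0,0) := by decide
  have h11 : ((1,1) : Fin 2 × Fin 2) ≠ (0,0) := by decide
  have hn00 : ¬ ((0,0) : Fin 2 × Fin 2) ≠ (0,0) := fun h => h rfl
  set Box : Set ({i : Fin 2 × Fin 2 // i ≠ (0,0)} → ℝ) :=
    Set.univ.pi (fun i => if i.1 = ((1,0) : Fin 2 × Fin 2) then Set.Ioo (3/4:ℝ) (13/16)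
      else Set.Ioo (0:ℝ) (1/16)) with hBox
  set l : ({i : Fin 2 × Fin 2 // i ≠ (0,0)} → ℝ) → ℝ :=
    fun x => x ⟨(0,1), h01⟩ + x ⟨(1,0), h10⟩ - x ⟨(1,1), h11⟩ with hl
  have huniq : ∀ i : {i : Fin 2 × Fin 2 // ¬ i ≠ (0,0)}, i = ⟨(0,0), hn00⟩ := by
    rintro ⟨i, hi⟩
    exact Subtype.ext (not_not.1 hi)
  haveI : Unique {i : Fin 2 × Fin 2 // ¬ i ≠ (0,0)} := ⟨⟨⟨(0,0), hn00⟩⟩, huniq⟩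
  have hev : ∀ (x : {i : Fin 2 × Fin 2 // i ≠ (0,0)} → ℝ)
      (y : {i : Fin 2 × Fin 2 // ¬ i ≠ (0,0)} → ℝ) (i : Fin 2 × Fin 2),
      e.symm (x, y) i = if h : i ≠ (0,0) then x ⟨i, h⟩ else y ⟨i, h⟩ := by
    intro x y i
    rfl
  have hxmem : ∀ x ∈ Box,
      x ⟨(0,1), h01⟩ ∈ Set.Ioo (0:ℝ) (1/16) ∧ x ⟨(1,0), h10⟩ ∈ Set.Ioo (3/4:ℝ) (13/16) ∧
      x ⟨(1,1), h11⟩ ∈ Set.Ioo (0:ℝ) (1/16) := by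
    intro x hx
    refine ⟨?_, ?_, ?_⟩
    · have h := hx ⟨(0,1), h01⟩ (Set.mem_univ _)
      dsimp only at h
      rwa [if_neg (by decide : ¬ ((0,1) : Fin 2 × Fin 2) = (1,0))] at h
    · have h := hx ⟨(1,0), h10⟩ (Set.mem_univ _)
      dsimp only at h
      rwa [if_pos rfl] at h
    · have h := hx ⟨(1,1), h11⟩ (Set.mem_univ _)
      dsimp only at h
      rwa [if_neg (by decide : ¬ ((1,1) : Fin 2 × Fin 2) = (1,0))] at h
  have slice : ∀ x ∈ Box, Prod.mk x ⁻¹' T =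
      Set.univ.pi (fun _ : {i : Fin 2 × Fin 2 // ¬ i ≠ (0,0)} => Set.Ioo (l x) (l x + ε)) := by
    intro x hx
    obtain ⟨hx1, hx2, hx3⟩ := hxmem x hx
    ext y
    simp only [Set.mem_preimage, hT, hS, Set.mem_setOf_eq, hev, dif_pos h01, dif_pos h10,
      dif_pos h11, dif_neg hn00, Set.mem_pi, Set.mem_univ, forall_true_left]
    constructor
    · rintro ⟨-, -, -, h⟩ i
      rw [huniq i]
      exact h
    · intro h
      exact ⟨hx1, hx2, hx3, h ⟨(0,0), hn00⟩⟩
  have hslice_meas : ∀ x ∈ Box,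
      (Measure.pi fun _ : {i : Fin 2 × Fin 2 // ¬ i ≠ (0,0)} => nu) (Prod.mk x ⁻¹' T)
        = ENNReal.ofReal ε := by
    intro x hx
    obtain ⟨hx1, hx2, hx3⟩ := hxmem x hx
    rw [slice x hx, Measure.pi_pi, Finset.univ_unique, Finset.prod_singleton]
    have hl0 : (0:ℝ) ≤ l x := by
      rw [hl]; dsimp only
      have := hx1.1; have := hx2.1; have := hx3.2
      linarith
    have hl1 : l x + ε ≤ 1 := by
      rw [hl]; dsimp only
      have := hx1.2; have := hx2.2; have := hx3.1
      linarith
    rw [nu_Ioo hl0 hl1]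
    ring_nf
  have hcard3 : Fintype.card {i : Fin 2 × Fin 2 // i ≠ (0,0)} = 3 := by
    simp [Fintype.card_subtype_compl]
  have hBoxMeasure : (Measure.pi fun _ : {i : Fin 2 × Fin 2 // i ≠ (0,0)} => nu) Box
      = ENNReal.ofReal (1/4096) := by
    rw [hBox, Measure.pi_pi]
    have each : ∀ i : {i : Fin 2 × Fin 2 // i ≠ (0,0)},
        nu (if i.1 = ((1,0) : Fin 2 × Fin 2) then Set.Ioo (3/4:ℝ) (13/16)
          else Set.Ioo (0:ℝ) (1/16)) = ENNReal.ofReal (1/16) := by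
      intro i
      by_cases h : i.1 = ((1,0) : Fin 2 × Fin 2)
      · rw [if_pos h, nu_Ioo (by norm_num) (by norm_num)]
        norm_num
      · rw [if_neg h, nu_Ioo le_rfl (by norm_num)]
        norm_num
    rw [Finset.prod_congr rfl (fun i _ => each i), Finset.prod_const, Finset.card_univ, hcard3,
      ← ENNReal.ofReal_pow (by norm_num : (0:ℝ) ≤ 1/16)]
    norm_num
  calc ENNReal.ofReal ε * ENNReal.ofReal (1/4096)
      = ENNReal.ofReal ε
          * (Measure.pi fun _ : {i : Fin 2 × Fin 2 // i ≠ (0,0)} => nu) Box := by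
        rw [hBoxMeasure]
    _ = ∫⁻ _ in Box, ENNReal.ofReal ε
          ∂(Measure.pi fun _ : {i : Fin 2 × Fin 2 // i ≠ (0,0)} => nu) :=
        (setLIntegral_const _ _).symm
    _ ≤ ∫⁻ x in Box,
          (Measure.pi fun _ : {i : Fin 2 × Fin 2 // ¬ i ≠ (0,0)} => nu) (Prod.mk x ⁻¹' T)
          ∂(Measure.pi fun _ : {i : Fin 2 × Fin 2 // i ≠ (0,0)} => nu) := by
        refine setLIntegral_mono (measurable_measure_prodMk_left hTm) ?_
        intro x hx
        rw [hslice_meas x hx]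
    _ ≤ ∫⁻ x, (Measure.pi fun _ : {i : Fin 2 × Fin 2 // ¬ i ≠ (0,0)} => nu) (Prod.mk x ⁻¹' T)
          ∂(Measure.pi fun _ : {i : Fin 2 × Fin 2 // i ≠ (0,0)} => nu) :=
        setLIntegral_le_lintegral _ _

lemma fin2_ne : ∀ (j a : Fin 2), a ≠ j → a = 1 - j := by decide

lemma fin2_filter (j : Fin 2) : Finset.univ.filter (· ≠ j) = {1 - j} := by
  fin_cases j <;> decide

instance fin2unique (j : Fin 2) : Unique {q : Fin 2 // q ≠ j} where
  default := ⟨1 - j, by fin_cases j <;> decide⟩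
  uniq a := Subtype.ext (fin2_ne j a.1 a.2)

lemma fin2_sup (j : Fin 2) (f : Fin 2 → ℝ) :
    (⨆ q : {q : Fin 2 // q ≠ j}, f q) = f (1 - j) := ciSup_unique

variable (w : Fin 2 → Fin 2 → ℝ)

lemma bp1a (t : ℕ) (i j : Fin 2) :
    (BPmsg 2 w (t+1)).1 i j i = w i j + (BPmsg 2 w t).2 (1-j) i j := by
  simp [BPmsg, fin2_filter]

lemma bp1b (t : ℕ) (i j r : Fin 2) (h : r ≠ i) :
    (BPmsg 2 w (t+1)).1 i j r = w i (1-j) + (BPmsg 2 w t).2 (1-j) i (1-j) := by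
  show (if r = i then _ else _) = _
  rw [if_neg h, fin2_sup j (fun q => w i q + ∑ k ∈ Finset.univ.filter (· ≠ j), (BPmsg 2 w t).2 k i q)]
  simp [fin2_filter]

lemma bp2a (t : ℕ) (j i : Fin 2) :
    (BPmsg 2 w (t+1)).2 j i j = w i j + (BPmsg 2 w t).1 (1-i) j i := by
  simp [BPmsg, fin2_filter]

lemma bp2b (t : ℕ) (j i r : Fin 2) (h : r ≠ j) :
    (BPmsg 2 w (t+1)).2 j i r = w (1-i) j + (BPmsg 2 w t).1 (1-i) j (1-i) := by
  show (if r = j then _ else _) = _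
  rw [if_neg h, fin2_sup i (fun q => w q j + ∑ k ∈ Finset.univ.filter (· ≠ i), (BPmsg 2 w t).1 k j q)]
  simp [fin2_filter]
-- two-step lemmas and main induction, appended to a.lean
lemma fin2_nesub : ∀ j : Fin 2, j ≠ 1 - j := by decide
lemma fin2_subsub : ∀ j : Fin 2, 1 - (1 - j) = j := by decide

lemma bpP2 (t : ℕ) (i j : Fin 2) :
    (BPmsg 2 w (t+2)).1 i j i
      = w i j + w (1-i) (1-j) + (BPmsg 2 w t).1 (1-i) (1-j) (1-i) := by
  rw [show t+2 = (t+1)+1 from rfl, bp1a, bp2b w t (1-j) i j (fin2_nesub j)]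
  ring

lemma bpQ2 (t : ℕ) (i j r : Fin 2) (h : r ≠ i) :
    (BPmsg 2 w (t+2)).1 i j r
      = w i (1-j) + w i (1-j) + (BPmsg 2 w t).1 (1-i) (1-j) i := by
  rw [show t+2 = (t+1)+1 from rfl, bp1b w (t+1) i j r h, bp2a]
  ring

lemma msg_form (m : ℕ) :
    (BPmsg 2 w (4*m+1)).1 1 0 1 = w 1 0 + 2*m*(w 0 1 + w 1 0) ∧
    (BPmsg 2 w (4*m+1)).1 1 1 1 = w 1 1 + 2*m*(w 0 0 + w 1 1) ∧
    (BPmsg 2 w (4*m+1)).1 1 0 0 = 2*w 1 1 + 2*m*(w 0 0 + w 1 1) ∧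
    (BPmsg 2 w (4*m+1)).1 1 1 0 = 2*w 1 0 + 2*m*(w 0 1 + w 1 0) := by
  induction m with
  | zero =>
    refine ⟨?_, ?_, ?_, ?_⟩ <;>
    · first
      | (rw [show 4*0+1 = 0+1 from rfl, bp1a]; simp [BPmsg])
      | (rw [show 4*0+1 = 0+1 from rfl, bp1b w 0 _ _ _ (by decide)]; simp [BPmsg]; ring)
  | succ m ih =>
    obtain ⟨h1, h2, h3, h4⟩ := ih
    have e : 4*(m+1)+1 = (4*m+1)+2+2 := by ring
    refine ⟨?_, ?_, ?_, ?_⟩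
    · rw [e, bpP2 w _ 1 0]
      rw [show (1:Fin 2)-1 = 0 from rfl, show (1:Fin 2)-0 = 1 from rfl]
      rw [bpP2 w _ 0 1, show (1:Fin 2)-1 = 0 from rfl, show (1:Fin 2)-0 = 1 from rfl, h1]
      push_cast; ring
    · rw [e, bpP2 w _ 1 1]
      rw [show (1:Fin 2)-1 = 0 from rfl]
      rw [bpP2 w _ 0 0, show (1:Fin 2)-0 = 1 from rfl, h2]
      push_cast; ring
    · rw [e, bpQ2 w _ 1 0 0 (by decide)]
      rw [show (1:Fin 2)-1 = 0 from rfl, show (1:Fin 2)-0 = 1 from rfl]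
      rw [bpQ2 w _ 0 1 1 (by decide), show (1:Fin 2)-1 = 0 from rfl, show (1:Fin 2)-0 = 1 from rfl, h3]
      push_cast; ring
    · rw [e, bpQ2 w _ 1 1 0 (by decide)]
      rw [show (1:Fin 2)-1 = 0 from rfl]
      rw [bpQ2 w _ 0 0 1 (by decide), show (1:Fin 2)-0 = 1 from rfl, h4]
      push_cast; ring
lemma Dval (m : ℕ) :
    belief 2 w (4*m+2) 0 0 - belief 2 w (4*m+2) 0 1
      = (4*m+2)*(w 0 0 - w 0 1) - (4*m+4)*(w 1 0 - w 1 1) := by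
  obtain ⟨h1, h2, h3, h4⟩ := msg_form w m
  have e : 4*m+2 = (4*m+1)+1 := rfl
  unfold belief
  rw [Fin.sum_univ_two, Fin.sum_univ_two, e,
    bp2a w _ 0 0, bp2b w _ 1 0 0 (by decide),
    bp2b w _ 0 0 1 (by decide), bp2a w _ 1 0,
    show (1:Fin 2)-0 = 1 from rfl]
  rw [h1, h2, h3, h4]
  push_cast; ring

lemma nonconv (t : ℕ) (ht : 1 ≤ t)
    (hb : w 0 1 ∈ Set.Ioo (0:ℝ) (1/16))
    (hc : w 1 0 ∈ Set.Ioo (3/4 : ℝ) (13/16))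
    (hd : w 1 1 ∈ Set.Ioo (0:ℝ) (1/16))
    (ha : w 0 0 ∈ Set.Ioo (w 0 1 + w 1 0 - w 1 1) (w 0 1 + w 1 0 - w 1 1 + 1/(t+8))) :
    ¬ BPConvergedBy 2 w (t - 1) := by
  rintro ⟨M, hM, hmax, hbel⟩
  set m := (t+1)/4 with hm
  have hsge : t - 1 ≤ 4*m+2 := by omega
  have hsle : 4*m+2 ≤ t+3 := by omega
  -- belief inequality
  have hD : belief 2 w (4*m+2) 0 0 - belief 2 w (4*m+2) 0 1 < 0 := by
    rw [Dval]
    have hy : (11/16 : ℝ) < w 1 0 - w 1 1 := by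
      have := hc.1; have := hd.2; linarith
    have hab : w 0 0 - w 0 1 < (w 1 0 - w 1 1) + 1/(t+8) := by
      have := ha.2; linarith
    have hs0 : (0:ℝ) ≤ (4*m+2 : ℝ) := by positivity
    have h1 : ((4*m+2 : ℝ)) * (w 0 0 - w 0 1)
        ≤ (4*m+2 : ℝ) * ((w 1 0 - w 1 1) + 1/(t+8)) :=
      mul_le_mul_of_nonneg_left (le_of_lt hab) hs0
    have hse : (4*m+2 : ℝ) * (1/(t+8)) < 1 := by
      rw [mul_one_div, div_lt_one (by positivity)]
      have : (4*m+2 : ℝ) ≤ (t:ℝ)+3 := by exact_mod_cast hsle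
      linarith
    nlinarith [hy, h1, hse, hs0]
  obtain ⟨j, hjM, hj⟩ := hbel (4*m+2) hsge 0
  have hj1 : j = 1 := by
    by_contra h
    have hj0 : j = 0 := by simpa using fin2_ne 1 j h
    subst hj0
    have := hj 1 (by decide)
    linarith
  subst hj1
  have hsub : M ⊆ ({(0,1),(1,0)} : Finset (Fin 2 × Fin 2)) := by
    intro p hp
    by_cases hpe : p = (0,1)
    · simp [hpe]
    · obtain ⟨h1, h2⟩ := hM (0,1) hjM p hp (fun e => hpe e.symm)
      obtain ⟨p1, p2⟩ := p
      simp only [Finset.mem_insert, Finset.mem_singleton, Prod.mk.injEq]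
      fin_cases p1 <;> fin_cases p2 <;> simp_all
  have hwM : matchingWeight 2 w M ≤ w 0 1 + w 1 0 := by
    have := Finset.sum_le_sum_of_subset_of_nonneg (f := fun p : Fin 2 × Fin 2 => w p.1 p.2)
      hsub (fun p _ _ => by
        obtain ⟨p1, p2⟩ := p
        fin_cases p1 <;> fin_cases p2 <;>
          simp_all <;> first | linarith [hb.1] | linarith [hc.1] | linarith [hd.1] | linarith [ha.1, hb.1, hc.1, hd.1])
    have hpair : ∑ p ∈ ({(0,1),(1,0)} : Finset (Fin 2 × Fin 2)), w p.1 p.2 = w 0 1 + w 1 0 := by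
      rw [Finset.sum_pair (by decide)]
    calc matchingWeight 2 w M = ∑ p ∈ M, w p.1 p.2 := rfl
      _ ≤ _ := this
      _ = _ := hpair
  have hM1 : IsMatching 2 ({(0,0),(1,1)} : Finset (Fin 2 × Fin 2)) := by unfold IsMatching; decide
  have hne : ({(0,0),(1,1)} : Finset (Fin 2 × Fin 2)) ≠ M := by
    intro e
    rw [← e] at hjM
    simp at hjM
  have hlt := hmax _ hM1 hne
  have hw1 : matchingWeight 2 w ({(0,0),(1,1)} : Finset (Fin 2 × Fin 2)) = w 0 0 + w 1 1 := by
    unfold matchingWeight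
    rw [Finset.sum_pair (by decide)]
  rw [hw1] at hlt
  have := ha.1
  linarith


/-- **Average-case lower tail bound on `K_{2,2}`.** If the four edge weights of
`K_{2,2}` are drawn independently and uniformly from `[0,1]`, then there is a constant
`c > 0` such that for every `t ≥ 1` the probability that BP needs at least `t`
iterations to converge (i.e. has not converged by iteration `t - 1`) is at least
`1/(c·t)`. -/
theorem bp_K22_lower_tail :
    ∃ c : ℝ, 0 < c ∧
      ∀ t : ℕ, 1 ≤ t →
        ENNReal.ofReal (1 / (c * t)) ≤
          Measure.pi (fun _ : Fin 2 × Fin 2 => (volume : Measure ℝ).restrict (Set.Icc 0 1))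
            {w : Fin 2 × Fin 2 → ℝ | ¬ BPConvergedBy 2 (fun i j => w (i, j)) (t - 1)} := by
  refine ⟨40000, by norm_num, fun t ht => ?_⟩
  set ε : ℝ := 1/((t:ℝ)+8) with hε
  have htR : (1:ℝ) ≤ (t:ℝ) := by exact_mod_cast ht
  have hεpos : 0 < ε := by rw [hε]; positivity
  have hε9 : ε ≤ 1/9 := by
    rw [hε, div_le_div_iff₀ (by linarith) (by norm_num)]
    linarith
  have hsub : {w : Fin 2 × Fin 2 → ℝ |
      w (0,1) ∈ Set.Ioo (0:ℝ) (1/16) ∧ w (1,0) ∈ Set.Ioo (3/4 : ℝ) (13/16) ∧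
      w (1,1) ∈ Set.Ioo (0:ℝ) (1/16) ∧
      w (0,0) ∈ Set.Ioo (w (0,1) + w (1,0) - w (1,1))
        (w (0,1) + w (1,0) - w (1,1) + ε)} ⊆
      {w : Fin 2 × Fin 2 → ℝ | ¬ BPConvergedBy 2 (fun i j => w (i, j)) (t - 1)} := by
    rintro w ⟨hb, hc, hd, ha⟩
    exact nonconv (fun i j => w (i, j)) t ht hb hc hd ha
  calc ENNReal.ofReal (1 / (40000 * (t:ℝ)))
      ≤ ENNReal.ofReal ε * ENNReal.ofReal (1/4096) := by
        rw [← ENNReal.ofReal_mul (le_of_lt hεpos)]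
        apply ENNReal.ofReal_le_ofReal
        have heq : ε * (1/4096) = 1/(((t:ℝ)+8)*4096) := by
          rw [hε, div_mul_div_comm, one_mul]
        rw [heq, div_le_div_iff₀ (by linarith) (by positivity)]
        nlinarith
    _ ≤ Measure.pi (fun _ : Fin 2 × Fin 2 => nu) _ := measure_prism ε hεpos hε9
    _ ≤ _ := measure_mono hsub
end

section
/- For every n ≥ 4 that is a multiple of 4, consider the bipartite graph consisting of n/4 vertex-disjoint copies of K_{2,2} (no edges between different copies), with all edge weights drawn independently and uniformly from [0,1], and let τ be the number of iterations until the belief propagation algorithm of Bayati et al. for maximum-weight matching converges on this graph (BP runs in parallel and independently on each copy, and τ is the maximum of the convergence times of the copies). Then there exist constants c' > 0 and C > 0 such that for every t ≥ n/c', the probability that τ ≥ t is at least C·n/t. -/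
open MeasureTheory

/-!
On `K_{2,2}` the BP messages split into four 4-cycles, and unrolling them gives
`b^{4k}_{u₀}(r) = (4k + 2) w₀ᵣ + 4k w₁,ᵣ₊₁`. So if the diagonal matching wins only by a gap
`w₀₀ + w₁₁ - w₀₁ - w₁₀ ∈ (0, δ]` while `w₀₁ - w₀₀ ≥ 1/5`, then `u₀` still points to the wrong
neighbour at every iteration `4k` with `4kδ ≤ 2/5`. Given the other three weights, `w₁₁` falls in
the required window of length `δ` with probability `δ`, so a copy is slow for `t` iterations with
probability of order `1/t`; by independence some of the `n/4` copies is slow with probability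
`1 - (1 - q)^{n/4} ≥ nq/8` with `q` of order `1/t`.
-/

open Set

section BlockIndependence

variable {ι κ α : Type*} [Fintype ι] [Fintype κ] [MeasurableSpace α] (μ : Measure α)
  [SigmaFinite μ]

lemma measurePreserving_curry :
    MeasurePreserving (MeasurableEquiv.curry ι κ α) (Measure.pi fun _ => μ)
      (Measure.pi fun _ => Measure.pi fun _ => μ) := by
  refine MeasurePreserving.symm _ ⟨(MeasurableEquiv.curry ι κ α).symm.measurable,
    (Measure.pi_eq fun s hs => ?_).symm⟩
  have : (MeasurableEquiv.curry ι κ α).symm ⁻¹' univ.pi s =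
      univ.pi fun i => univ.pi fun k => s (i, k) := by
    ext w; simp [MeasurableEquiv.coe_curry_symm, Set.mem_pi, Prod.forall]
  simp_rw [MeasurableEquiv.map_apply, this, Measure.pi_pi, ← Fintype.prod_prod_type']

lemma measure_pi_prod_setOf_forall_mem (S : Set (κ → α)) :
    Measure.pi (fun _ : ι × κ => μ) {w | ∀ i, (fun k => w (i, k)) ∈ S} =
      Measure.pi (fun _ => μ) S ^ Fintype.card ι := by
  rw [← Finset.card_univ, ← Finset.prod_const, ← Measure.pi_pi,
    ← (measurePreserving_curry μ).measure_preimage_equiv]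
  congr 1
  ext w
  simp only [MeasurableEquiv.coe_curry, mem_preimage, mem_univ_pi]
  rfl

lemma measure_pi_prod_setOf_exists_mem [IsProbabilityMeasure μ] {S : Set (κ → α)}
    (hS : MeasurableSet S) :
    Measure.pi (fun _ : ι × κ => μ) {w | ∃ i, (fun k => w (i, k)) ∈ S} =
      1 - (1 - Measure.pi (fun _ => μ) S) ^ Fintype.card ι := by
  have hforall : MeasurableSet {w : ι × κ → α | ∀ i, (fun k => w (i, k)) ∈ Sᶜ} := by
    simp only [ofPred_forall]
    exact .iInter fun i => (measurable_pi_lambda _ fun k => measurable_pi_apply (i, k)) hS.compl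
  rw [← prob_compl_eq_one_sub hS, ← measure_pi_prod_setOf_forall_mem,
    ← prob_compl_eq_one_sub hforall]
  congr 1
  ext w
  simp

end BlockIndependence

lemma prod_restrict_Icc_setOf_mem_Ioc {X : Type*} [MeasurableSpace X] (μ : Measure X) [SFinite μ]
    {A : Set X} (hA : MeasurableSet A) {f : X → ℝ} (hf : Measurable f) {δ : ℝ}
    (hfA : ∀ x ∈ A, 0 ≤ f x ∧ f x + δ ≤ 1) :
    (μ.prod (volume.restrict (Icc 0 1))) {p | p.1 ∈ A ∧ p.2 ∈ Ioc (f p.1) (f p.1 + δ)} =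
      μ A * ENNReal.ofReal δ := by
  have hmeas : MeasurableSet {p : X × ℝ | p.1 ∈ A ∧ p.2 ∈ Ioc (f p.1) (f p.1 + δ)} :=
    (measurable_fst hA).inter <|
      (measurableSet_lt (hf.comp measurable_fst) measurable_snd).inter
        (measurableSet_le measurable_snd ((hf.comp measurable_fst).add_const δ))
  have hsection : ∀ x, volume.restrict (Icc 0 1)
      (Prod.mk x ⁻¹' {p : X × ℝ | p.1 ∈ A ∧ p.2 ∈ Ioc (f p.1) (f p.1 + δ)}) =
      A.indicator (fun _ => ENNReal.ofReal δ) x := by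
    intro x
    by_cases hx : x ∈ A
    · have hsub : Ioc (f x) (f x + δ) ⊆ Icc 0 1 :=
        Ioc_subset_Icc_self.trans (Icc_subset_Icc (hfA x hx).1 (hfA x hx).2)
      have hpre : Prod.mk x ⁻¹' {p : X × ℝ | p.1 ∈ A ∧ p.2 ∈ Ioc (f p.1) (f p.1 + δ)} =
          Ioc (f x) (f x + δ) := by
        ext y; simp [hx]
      rw [hpre, Measure.restrict_apply measurableSet_Ioc, inter_eq_left.2 hsub, Real.volume_Ioc,
        add_sub_cancel_left, indicator_of_mem hx]
    · simp [hx]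
  rw [Measure.prod_apply hmeas, lintegral_congr fun x => hsection x,
    lintegral_indicator_const hA, mul_comm]

instance : IsProbabilityMeasure (volume.restrict (Icc (0 : ℝ) 1)) :=
  ⟨by simp⟩

lemma one_sub_pow_le_one_sub_mul_add_sq {p : ℝ} (hp0 : 0 ≤ p) (hp1 : p ≤ 1) (m : ℕ) :
    (1 - p) ^ m ≤ 1 - m * p + (m * p) ^ 2 / 2 := by
  induction m with
  | zero => simp
  | succ m ih =>
    rw [pow_succ]
    push_cast
    nlinarith [mul_le_mul_of_nonneg_right ih (sub_nonneg.2 hp1), mul_nonneg hp0 hp0,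
      mul_nonneg (mul_nonneg hp0 hp0) hp0, mul_nonneg (mul_nonneg (mul_nonneg hp0 hp0) hp0)
        (sq_nonneg (m : ℝ))]

lemma mul_div_two_le_one_sub_one_sub_pow {p : ℝ} (hp0 : 0 ≤ p) (hp1 : p ≤ 1) {m : ℕ}
    (hmp : m * p ≤ 1) : m * p / 2 ≤ 1 - (1 - p) ^ m := by
  nlinarith [one_sub_pow_le_one_sub_mul_add_sq hp0 hp1 m,
    mul_nonneg (Nat.cast_nonneg m : (0 : ℝ) ≤ m) hp0]

namespace K22

lemma univ_filter_ne (j : Fin 2) : Finset.univ.filter (· ≠ j) = {j + 1} := by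
  fin_cases j <;> decide

lemma ciSup_ne (j : Fin 2) (f : Fin 2 → ℝ) :
    ⨆ q : {q : Fin 2 // q ≠ j}, f q = f (j + 1) := by
  let _ : Unique {q : Fin 2 // q ≠ j} :=
    { default := ⟨j + 1, by fin_cases j <;> decide⟩
      uniq := by rintro ⟨q, hq⟩; ext; revert hq; fin_cases j <;> fin_cases q <;> decide }
  exact ciSup_unique

lemma BPmsg_succ_fst (w : Fin 2 → Fin 2 → ℝ) (t : ℕ) (i j r : Fin 2) :
    (BPmsg 2 w (t + 1)).1 i j r =
      if r = i then w i j + (BPmsg 2 w t).2 (j + 1) i j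
      else w i (j + 1) + (BPmsg 2 w t).2 (j + 1) i (j + 1) := by
  simp only [BPmsg, univ_filter_ne, Finset.sum_singleton,
    ciSup_ne j fun q => w i q + (BPmsg 2 w t).2 (j + 1) i q]

lemma BPmsg_succ_snd (w : Fin 2 → Fin 2 → ℝ) (t : ℕ) (j i r : Fin 2) :
    (BPmsg 2 w (t + 1)).2 j i r =
      if r = j then w i j + (BPmsg 2 w t).1 (i + 1) j i
      else w (i + 1) j + (BPmsg 2 w t).1 (i + 1) j (i + 1) := by
  simp only [BPmsg, univ_filter_ne, Finset.sum_singleton,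
    ciSup_ne i fun q => w q j + (BPmsg 2 w t).1 (i + 1) j q]

/-- On `K_{2,2}` the messages split into 4-cycles; along each cycle the four message values
evolve by this recursion, where `α` and `β` are the weights of one perfect matching. -/
noncomputable def msgCycle (α β : ℝ) : ℕ → ℝ × ℝ × ℝ × ℝ
  | 0 => (α, 0, β, 0)
  | t + 1 =>
    (α + (msgCycle α β t).2.1, β + (msgCycle α β t).2.2.1, β + (msgCycle α β t).2.2.2,
      α + (msgCycle α β t).1)

lemma msgCycle_four_mul (α β : ℝ) (k : ℕ) :
    msgCycle α β (4 * k) = ((2 * k + 1) * α + 2 * k * β, 2 * k * (α + β),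
      2 * k * α + (2 * k + 1) * β, 2 * k * (α + β)) := by
  induction k with
  | zero => simp [msgCycle]
  | succ k ih =>
    rw [show 4 * (k + 1) = 4 * k + 1 + 1 + 1 + 1 by ring]
    simp only [msgCycle, ih, Prod.mk.injEq]
    push_cast
    refine ⟨?_, ?_, ?_, ?_⟩ <;> ring

lemma BPmsg_fst_cycle (w : Fin 2 → Fin 2 → ℝ) (i j : Fin 2) (t : ℕ) :
    ((BPmsg 2 w t).1 i j i, (BPmsg 2 w t).2 (j + 1) i j,
      (BPmsg 2 w t).1 (i + 1) (j + 1) (i + 1), (BPmsg 2 w t).2 j (i + 1) (j + 1)) =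
      msgCycle (w i j) (w (i + 1) (j + 1)) t := by
  induction t with
  | zero => fin_cases i <;> fin_cases j <;> simp [BPmsg, msgCycle]
  | succ t ih =>
    rw [msgCycle, ← ih]
    fin_cases i <;> fin_cases j <;> simp [BPmsg_succ_fst, BPmsg_succ_snd]

lemma BPmsg_snd_cycle (w : Fin 2 → Fin 2 → ℝ) (i j : Fin 2) (t : ℕ) :
    ((BPmsg 2 w t).2 j i j, (BPmsg 2 w t).1 (i + 1) j i,
      (BPmsg 2 w t).2 (j + 1) (i + 1) (j + 1), (BPmsg 2 w t).1 i (j + 1) (i + 1)) =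
      msgCycle (w i j) (w (i + 1) (j + 1)) t := by
  induction t with
  | zero => fin_cases i <;> fin_cases j <;> simp [BPmsg, msgCycle]
  | succ t ih =>
    rw [msgCycle, ← ih]
    fin_cases i <;> fin_cases j <;> simp [BPmsg_succ_fst, BPmsg_succ_snd]

lemma belief_four_mul (w : Fin 2 → Fin 2 → ℝ) (k : ℕ) (i r : Fin 2) :
    belief 2 w (4 * k) i r = (4 * k + 2) * w i r + 4 * k * w (i + 1) (r + 1) := by
  have hsnd := congrArg Prod.fst ((BPmsg_snd_cycle w i r (4 * k)).trans (msgCycle_four_mul _ _ k))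
  have hfst := congrArg (·.2.1) ((BPmsg_fst_cycle w i r (4 * k)).trans (msgCycle_four_mul _ _ k))
  have hsum : ∑ l, (BPmsg 2 w (4 * k)).2 l i r =
      (BPmsg 2 w (4 * k)).2 r i r + (BPmsg 2 w (4 * k)).2 (r + 1) i r := by
    fin_cases r <;> simp [Fin.sum_univ_two, add_comm]
  simp only at hsnd hfst
  rw [belief, hsum, hsnd, hfst]
  ring

lemma subset_antidiag_of_isMatching {M : Finset (Fin 2 × Fin 2)} (hM : IsMatching 2 M)
    (h01 : (0, 1) ∈ M) : M ⊆ {(0, 1), (1, 0)} := by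
  intro p hp
  by_cases hp01 : p = (0, 1)
  · simp [hp01]
  · have hne := hM p hp (0, 1) h01 hp01
    have key : ∀ q : Fin 2 × Fin 2, q.1 ≠ 0 ∧ q.2 ≠ 1 → q = (1, 0) := by decide
    simp [key p hne]

lemma matchingWeight_pair (w : Fin 2 → Fin 2 → ℝ) (i j : Fin 2) :
    matchingWeight 2 w {(i, j), (i + 1, j + 1)} = w i j + w (i + 1) (j + 1) := by
  rw [matchingWeight, Finset.sum_pair (by simp)]

lemma belief_lt_of_BPConvergedBy {w : Fin 2 → Fin 2 → ℝ} {t s : ℕ} (hconv : BPConvergedBy 2 w t)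
    (hts : t ≤ s) (hw : ∀ i j, 0 ≤ w i j) (hdiag : w 0 1 + w 1 0 < w 0 0 + w 1 1) :
    belief 2 w s 0 1 < belief 2 w s 0 0 := by
  obtain ⟨M, hM, hmax, hbel⟩ := hconv
  obtain ⟨j, hjM, hj⟩ := hbel s hts 0
  fin_cases j
  · exact hj 1 (by decide)
  · exfalso
    have hsub := subset_antidiag_of_isMatching hM hjM
    have hweight : matchingWeight 2 w M ≤ w 0 1 + w 1 0 := by
      calc matchingWeight 2 w M ≤ matchingWeight 2 w {(0, 1), (1, 0)} :=
            Finset.sum_le_sum_of_subset_of_nonneg hsub fun p _ _ => hw p.1 p.2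
        _ = w 0 1 + w 1 0 := matchingWeight_pair w 0 1
    have hdiagM : {(0, 0), (1, 1)} ≠ M := fun h => by
      simpa using hsub (h ▸ Finset.mem_insert_self _ _ : ((0, 0) : Fin 2 × Fin 2) ∈ M)
    have := hmax _ (by unfold IsMatching; decide) hdiagM
    have hdiagW : matchingWeight 2 w {(0, 0), (1, 1)} = w 0 0 + w 1 1 := matchingWeight_pair w 0 0
    linarith

def weightMatrix {α : Type*} (p : (α × α × α) × α) : Fin 2 × Fin 2 → α :=
  fun e => ![![p.1.1, p.1.2.1], ![p.1.2.2, p.2]] e.1 e.2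

lemma measurable_weightMatrix {α : Type*} [MeasurableSpace α] :
    Measurable (weightMatrix (α := α)) := by
  refine measurable_pi_lambda _ fun e => ?_
  fin_cases e <;> simp [weightMatrix] <;> fun_prop

lemma map_weightMatrix {α : Type*} [MeasurableSpace α] (μ : Measure α) [SigmaFinite μ] :
    Measure.map weightMatrix ((μ.prod (μ.prod μ)).prod μ) =
      Measure.pi fun _ : Fin 2 × Fin 2 => μ := by
  refine (Measure.pi_eq fun s hs => ?_).symm
  have : weightMatrix ⁻¹' univ.pi s = (s (0, 0) ×ˢ s (0, 1) ×ˢ s (1, 0)) ×ˢ s (1, 1) := by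
    ext p
    simp [weightMatrix, Set.mem_pi, Prod.forall, Fin.forall_fin_two, and_assoc]
  rw [Measure.map_apply measurable_weightMatrix (.univ_pi hs), this, Measure.prod_prod,
    Measure.prod_prod, Measure.prod_prod, Fintype.prod_prod_type]
  simp only [Fin.prod_univ_two]
  ring

/-- Weights of `K_{2,2}` for which the diagonal is the unique maximum-weight matching, but only
by a gap `w₀₀ + w₁₁ - w₀₁ - w₁₀ ≤ δ`, while `u₀` prefers `v₁` by at least `w₀₁ - w₀₀ ≥ 1/5`. -/
def slowWeights (δ : ℝ) : Set (Fin 2 × Fin 2 → ℝ) :=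
  {v | v (0, 0) ∈ Icc 0 (1 / 5) ∧ v (0, 1) ∈ Icc (2 / 5) (3 / 5) ∧ v (1, 0) ∈ Icc 0 (1 / 5) ∧
    v (1, 1) ∈ Ioc (v (0, 1) + v (1, 0) - v (0, 0)) (v (0, 1) + v (1, 0) - v (0, 0) + δ)}

lemma measurableSet_slowWeights (δ : ℝ) : MeasurableSet (slowWeights δ) := by
  unfold slowWeights
  measurability

lemma measure_slowWeights {δ : ℝ} (hδ : δ ≤ 1 / 5) :
    Measure.pi (fun _ => volume.restrict (Icc (0 : ℝ) 1)) (slowWeights δ) =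
      ENNReal.ofReal (δ / 125) := by
  have hIcc : ∀ a b : ℝ, 0 ≤ a → b ≤ 1 →
      volume.restrict (Icc (0 : ℝ) 1) (Icc a b) = ENNReal.ofReal (b - a) := fun a b ha hb => by
    rw [Measure.restrict_apply measurableSet_Icc, inter_eq_left.2 (Icc_subset_Icc ha hb),
      Real.volume_Icc]
  set A : Set (ℝ × ℝ × ℝ) := Icc 0 (1 / 5) ×ˢ Icc (2 / 5) (3 / 5) ×ˢ Icc 0 (1 / 5)
  have hpre : weightMatrix ⁻¹' slowWeights δ =
      {p | p.1 ∈ A ∧ p.2 ∈ Ioc (p.1.2.1 + p.1.2.2 - p.1.1) (p.1.2.1 + p.1.2.2 - p.1.1 + δ)} := by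
    ext p
    simp [slowWeights, weightMatrix, A, Set.mem_prod, -Icc_prod_Icc, and_assoc]
  have hA : MeasurableSet A := measurableSet_Icc.prod (measurableSet_Icc.prod measurableSet_Icc)
  have hf : Measurable fun x : ℝ × ℝ × ℝ => x.2.1 + x.2.2 - x.1 := by fun_prop
  have hfA : ∀ x ∈ A, 0 ≤ x.2.1 + x.2.2 - x.1 ∧ x.2.1 + x.2.2 - x.1 + δ ≤ 1 := by
    rintro ⟨a, b, c⟩ ⟨⟨ha0, ha1⟩, ⟨hb0, hb1⟩, ⟨hc0, hc1⟩⟩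
    constructor <;> dsimp only <;> linarith
  rw [← map_weightMatrix, Measure.map_apply measurable_weightMatrix (measurableSet_slowWeights δ),
    hpre, prod_restrict_Icc_setOf_mem_Ioc _ hA hf hfA, Measure.prod_prod, Measure.prod_prod,
    hIcc _ _ le_rfl (by norm_num), hIcc _ _ (by norm_num) (by norm_num),
    ← ENNReal.ofReal_mul (by norm_num), ← ENNReal.ofReal_mul (by norm_num),
    ← ENNReal.ofReal_mul (by norm_num)]
  congr 1
  ring

lemma not_BPConvergedBy_of_mem_slowWeights {δ : ℝ} {v : Fin 2 × Fin 2 → ℝ}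
    (hv : v ∈ slowWeights δ) {t k : ℕ} (htk : t ≤ 4 * k) (hkδ : 4 * k * δ ≤ 2 / 5) :
    ¬ BPConvergedBy 2 (fun a b => v (a, b)) t := by
  obtain ⟨⟨h00, h00'⟩, ⟨h01, h01'⟩, ⟨h10, h10'⟩, h11, h11'⟩ := hv
  intro hconv
  have hw : ∀ i j, 0 ≤ v (i, j) := by
    intro i j; fin_cases i <;> fin_cases j <;> dsimp <;> linarith
  have hlt := belief_lt_of_BPConvergedBy hconv htk hw (by linarith)
  simp only [belief_four_mul, zero_add, Fin.reduceAdd] at hlt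
  have hgap : 4 * (k : ℝ) * (v (0, 0) + v (1, 1) - v (0, 1) - v (1, 0)) ≤ 4 * k * δ :=
    mul_le_mul_of_nonneg_left (by linarith) (by positivity)
  nlinarith

lemma ofReal_le_measure_exists_slowWeights {m : ℕ} {δ : ℝ} (hδ0 : 0 ≤ δ) (hδ : δ ≤ 1 / 5)
    (hmδ : m * δ ≤ 125) :
    ENNReal.ofReal (m * δ / 250) ≤ Measure.pi (fun _ => volume.restrict (Icc (0 : ℝ) 1))
      {w : Fin m × (Fin 2 × Fin 2) → ℝ | ∃ j, (fun e => w (j, e)) ∈ slowWeights δ} := by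
  have hq0 : 0 ≤ δ / 125 := by positivity
  have hbernoulli : m * δ / 250 ≤ 1 - (1 - δ / 125) ^ m := by
    have := mul_div_two_le_one_sub_one_sub_pow hq0 (by linarith) (m := m) (by linarith)
    linarith
  calc ENNReal.ofReal (m * δ / 250) ≤ ENNReal.ofReal (1 - (1 - δ / 125) ^ m) :=
        ENNReal.ofReal_le_ofReal hbernoulli
    _ = 1 - (1 - Measure.pi (fun _ => volume.restrict (Icc (0 : ℝ) 1)) (slowWeights δ)) ^ m := by
      rw [measure_slowWeights hδ, ENNReal.ofReal_sub _ (pow_nonneg (by linarith) m),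
        ENNReal.ofReal_pow (by linarith), ENNReal.ofReal_sub _ hq0, ENNReal.ofReal_one]
    _ = _ := by
      rw [measure_pi_prod_setOf_exists_mem _ (measurableSet_slowWeights δ), Fintype.card_fin]

end K22

/-- **Average-case lower tail bound on disjoint copies of `K_{2,2}`.** For `n ≥ 4` a
multiple of `4`, consider the bipartite graph consisting of `n/4` vertex-disjoint
copies of `K_{2,2}` with all edge weights drawn independently and uniformly from
`[0,1]`. BP runs in parallel and independently on the copies, so it needs at least
`t` iterations if and only if on some copy it has not converged by iteration `t - 1`.
There are constants `c' > 0` and `C > 0` such that for every `t ≥ n/c'` the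
probability of this is at least `C·n/t`. -/
theorem bp_disjoint_K22_lower_tail :
    ∃ c' C : ℝ, 0 < c' ∧ 0 < C ∧
      ∀ n : ℕ, 4 ∣ n → 4 ≤ n →
        ∀ t : ℕ, (n : ℝ) / c' ≤ t →
          ENNReal.ofReal (C * n / t) ≤
            Measure.pi
              (fun _ : Fin (n / 4) × (Fin 2 × Fin 2) =>
                (volume : Measure ℝ).restrict (Set.Icc 0 1))
              {w : Fin (n / 4) × (Fin 2 × Fin 2) → ℝ |
                ∃ j : Fin (n / 4),
                  ¬ BPConvergedBy 2 (fun a b => w (j, (a, b))) (t - 1)} := by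
  refine ⟨1, 1 / 15000, one_pos, by norm_num, fun n hdvd hn t ht => ?_⟩
  rw [div_one] at ht
  set δ : ℝ := 1 / (5 * (t + 2))
  set k := (t + 2) / 4
  have hδ0 : 0 < δ := by positivity
  have hδt : δ * (5 * (t + 2)) = 1 := div_mul_cancel₀ 1 (by positivity)
  have hn4 : (4 : ℝ) ≤ n := by exact_mod_cast hn
  have hm : ((n / 4 : ℕ) : ℝ) = n / 4 := by rw [Nat.cast_div hdvd (by norm_num)]; norm_num
  have hk : 4 * (k : ℝ) ≤ t + 2 := by exact_mod_cast (show 4 * k ≤ t + 2 by omega)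
  have hkδ : 4 * (k : ℝ) * δ ≤ 2 / 5 := by nlinarith
  have hnδ : (n : ℝ) * δ ≤ t * δ := mul_le_mul_of_nonneg_right ht hδ0.le
  have hC : 1 / 15000 * (n : ℝ) / t ≤ (n / 4 : ℕ) * δ / 250 := by
    rw [hm, div_le_iff₀ (by linarith)]
    nlinarith
  calc ENNReal.ofReal (1 / 15000 * n / t) ≤ ENNReal.ofReal ((n / 4 : ℕ) * δ / 250) :=
        ENNReal.ofReal_le_ofReal hC
    _ ≤ _ := K22.ofReal_le_measure_exists_slowWeights hδ0.le (by nlinarith) (by nlinarith)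
    _ ≤ _ := by
      refine measure_mono fun w ⟨j, hj⟩ => ⟨j, ?_⟩
      exact K22.not_BPConvergedBy_of_mem_slowWeights hj (by omega) hkδ
end
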